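/- arXiv:0804.1382 — 2 statements merged into one kernel-verified Lean document; each statement's English description precedes it below -/
import Mathlib

section
/- Let 0 < a < 1, P1 > 0 and P2 ≥ 0 be real numbers. Then R_s(a, P1, P2) > 0; that is, in the weak-interference regime a < 1 a strictly positive secrecy rate is achievable for any positive transmit power and any interferer power. -/
/-!
For `a < 1` the rate is a difference `g x - g y` with `g` strictly increasing, so it suffices to see
that the legitimate receiver's SNR exceeds the eavesdropper's: `a * P1 < P1` when `P1 ≤ P2`, and
`a * P1 / (1 + P2) < P1 / (1 + a * P2)` otherwise, which after clearing denominators is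
`0 < (1 - a) + (1 - a ^ 2) * P2`.
-/

/-- `g x = (1/2) * log₂ (1 + x)` -/
noncomputable def g (x : ℝ) : ℝ := (1/2) * Real.logb 2 (1 + x)

/-- Achievable secrecy rate of the symmetric Gaussian wiretap channel
with a helping interferer. -/
noncomputable def Rs (a P1 P2 : ℝ) : ℝ :=
  if 1 + P2 ≤ a then 0
  else if 1 ≤ a then
    if P1 < P2 ∧ 1 + P1 < a then g P1 - g (a * P1 / (1 + P2))
    else if P1 < P2 ∧ a ≤ 1 + P1 then g (P1 + a * P2) - g (a * P1 + P2)
    else 0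
  else
    if P2 < P1 then g (P1 / (1 + a * P2)) - g (a * P1 / (1 + P2))
    else g P1 - g (a * P1)

lemma g_strictMonoOn : StrictMonoOn g (Set.Ioi (-1)) := by
  intro x hx y _ hxy
  have hx : (0 : ℝ) < 1 + x := by linarith [Set.mem_Ioi.mp hx]
  have := Real.logb_lt_logb one_lt_two hx (by linarith : 1 + x < 1 + y)
  unfold g
  linarith

lemma sub_g_pos {x y : ℝ} (hx : -1 < x) (hxy : x < y) : 0 < g y - g x :=
  sub_pos.mpr (g_strictMonoOn hx (hx.trans hxy) hxy)

lemma mul_div_one_add_lt_div_one_add_mul {a P1 P2 : ℝ} (ha0 : 0 ≤ a) (ha1 : a < 1)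
    (hP1 : 0 < P1) (hP2 : 0 ≤ P2) : a * P1 / (1 + P2) < P1 / (1 + a * P2) := by
  rw [div_lt_div_iff₀ (by positivity) (by positivity)]
  have : 0 < (1 - a) + (1 - a ^ 2) * P2 := by
    have : 0 ≤ 1 - a ^ 2 := by nlinarith
    positivity
  nlinarith

lemma Rs_of_lt_one {a P1 P2 : ℝ} (ha1 : a < 1) (hP2 : 0 ≤ P2) :
    Rs a P1 P2 = if P2 < P1 then g (P1 / (1 + a * P2)) - g (a * P1 / (1 + P2))
      else g P1 - g (a * P1) := by
  rw [Rs, if_neg (by linarith), if_neg ha1.not_ge]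

/-- In the weak-interference regime `0 < a < 1`, a strictly positive secrecy
rate is achievable for any positive transmit power and any interferer power. -/
theorem positive_rate_weak (a P1 P2 : ℝ) (ha0 : 0 < a) (ha1 : a < 1)
    (hP1 : 0 < P1) (hP2 : 0 ≤ P2) :
    0 < Rs a P1 P2 := by
  rw [Rs_of_lt_one ha1 hP2]
  split_ifs
  · have : -1 < a * P1 / (1 + P2) := by linarith [show 0 ≤ a * P1 / (1 + P2) by positivity]
    exact sub_g_pos this (mul_div_one_add_lt_div_one_add_mul ha0.le ha1 hP1 hP2)
  · exact sub_g_pos (by nlinarith) (by nlinarith)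
end

section
/- (Power-unconstrained secrecy rate, weak interference, explicit power control.) Let 0 < a < 1 be a real number, and for P1 > 0 set P2*(P1) := (√(1 + (1+a)·P1) − 1)/(1+a). Then the function P1 ↦ g(P1/(1 + a·P2*(P1))) − g(a·P1/(1 + P2*(P1))) tends, as P1 → ∞, to log₂(1/a); in particular the helping interferer doubles the power-unconstrained secrecy rate (1/2)·log₂(1/a) of the Gaussian wiretap channel without interferer. -/
open Filter

lemma g_sub_g {x y : ℝ} (hx : 0 < 1 + x) (hy : 0 < 1 + y) :
    g x - g y = Real.logb 2 ((1 + x) / (1 + y)) / 2 := by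
  rw [g, g, Real.logb_div hx.ne' hy.ne']
  ring

section Substitution

variable {a s P : ℝ}

lemma one_add_div_one_add_mul_eq (ha : 0 ≤ a) (hs : 0 ≤ s) (hsP : s ^ 2 = 1 + (1 + a) * P) :
    1 + P / (1 + a * ((s - 1) / (1 + a))) = s * (a + s) / (1 + a * s) := by
  have h1a : 1 + a ≠ 0 := by positivity
  have h1as : 1 + a * s ≠ 0 := by positivity
  have hden : 1 + a * ((s - 1) / (1 + a)) = (1 + a * s) / (1 + a) := by
    field_simp
    ring
  rw [hden]
  field_simp
  linear_combination -hsP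

lemma one_add_mul_div_one_add_eq (ha : 0 ≤ a) (hs : 0 < s) (hsP : s ^ 2 = 1 + (1 + a) * P) :
    1 + a * P / (1 + (s - 1) / (1 + a)) = s * (1 + a * s) / (a + s) := by
  have h1a : 1 + a ≠ 0 := by positivity
  have has : a + s ≠ 0 := by positivity
  have hden : 1 + (s - 1) / (1 + a) = (a + s) / (1 + a) := by
    field_simp
    ring
  rw [hden]
  field_simp
  linear_combination -a * hsP

lemma g_sub_g_eq_logb_of_sq_eq (ha : 0 ≤ a) (hs : 0 < s) (hsP : s ^ 2 = 1 + (1 + a) * P) :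
    g (P / (1 + a * ((s - 1) / (1 + a)))) - g (a * P / (1 + (s - 1) / (1 + a))) =
      Real.logb 2 ((a + s) / (1 + a * s)) := by
  rw [g_sub_g (by rw [one_add_div_one_add_mul_eq ha hs.le hsP]; positivity)
      (by rw [one_add_mul_div_one_add_eq ha hs hsP]; positivity),
    one_add_div_one_add_mul_eq ha hs.le hsP, one_add_mul_div_one_add_eq ha hs hsP]
  have hratio : s * (a + s) / (1 + a * s) / (s * (1 + a * s) / (a + s)) =
      ((a + s) / (1 + a * s)) ^ 2 := by
    field_simp
  rw [hratio, Real.logb_pow]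
  ring

end Substitution

lemma tendsto_add_div_one_add_mul_atTop {a : ℝ} (ha : 0 < a) :
    Tendsto (fun s : ℝ => (a + s) / (1 + a * s)) atTop (nhds (1 / a)) := by
  have hden : Tendsto (fun s : ℝ => 1 + a * s) atTop atTop :=
    tendsto_atTop_add_const_left _ 1 (tendsto_id.const_mul_atTop ha)
  have hlim : Tendsto (fun s : ℝ => 1 / a + (a - 1 / a) / (1 + a * s)) atTop (nhds (1 / a)) := by
    simpa using tendsto_const_nhds.add (tendsto_const_nhds.div_atTop hden)
  refine hlim.congr' ?_
  filter_upwards [eventually_ge_atTop 0] with s hs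
  have h1as : 1 + a * s ≠ 0 := by positivity
  field_simp
  ring

theorem power_unconstrained_weak_explicit_general (a : ℝ) (ha0 : 0 < a) :
    Tendsto
      (fun P1 : ℝ =>
        g (P1 / (1 + a * ((Real.sqrt (1 + (1 + a) * P1) - 1) / (1 + a)))) -
        g (a * P1 / (1 + (Real.sqrt (1 + (1 + a) * P1) - 1) / (1 + a))))
      atTop (nhds (Real.logb 2 (1/a))) := by
  have hsqrt : Tendsto (fun P1 : ℝ => Real.sqrt (1 + (1 + a) * P1)) atTop atTop :=
    Real.tendsto_sqrt_atTop.comp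
      (tendsto_atTop_add_const_left _ 1 (tendsto_id.const_mul_atTop (by positivity)))
  have hlim := ((Real.continuousAt_logb (b := 2) (by positivity)).tendsto.comp
    ((tendsto_add_div_one_add_mul_atTop ha0).comp hsqrt))
  refine hlim.congr' ?_
  filter_upwards [eventually_ge_atTop 0] with P1 hP1
  have hrad : 0 ≤ 1 + (1 + a) * P1 := by positivity
  exact (g_sub_g_eq_logb_of_sq_eq ha0.le (Real.sqrt_pos.2 (by positivity)) (Real.sq_sqrt hrad)).symm

/-- Power-unconstrained secrecy rate, weak interference, with the optimal
interferer power `P2*(P1) = (√(1+(1+a)P1)-1)/(1+a)`: the rate tends to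
`log₂ (1/a)` as `P1 → ∞`. -/
theorem power_unconstrained_weak_explicit (a : ℝ) (ha0 : 0 < a) (ha1 : a < 1) :
    Tendsto
      (fun P1 : ℝ =>
        g (P1 / (1 + a * ((Real.sqrt (1 + (1 + a) * P1) - 1) / (1 + a)))) -
        g (a * P1 / (1 + (Real.sqrt (1 + (1 + a) * P1) - 1) / (1 + a))))
      atTop (nhds (Real.logb 2 (1/a))) :=
  power_unconstrained_weak_explicit_general a ha0
end
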